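/- The confounding bias of φ satisfies E_Q[m_φ∘φ − m] = − E_P[ m(X) · ( w*(X) − w*_φ(φ(X)) ) ], where w*_φ = d(Q∘φ⁻¹)/d(P_X∘φ⁻¹). -/

import Mathlib

open MeasureTheory ProbabilityTheory ENNReal

noncomputable section

lemma memℒp_condexp_two {α : Type*} {m m0 : MeasurableSpace α} (hm : m ≤ m0)
    {μ : Measure α} [IsFiniteMeasure μ] {f : α → ℝ} (hf : MemLp f 2 μ) :
    MemLp (μ[f|m]) 2 μ := by
  set G : Lp ℝ 2 μ := (condExpL2 ℝ ℝ hm (hf.toLp f) : Lp ℝ 2 μ) with hG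
  have hGae : (G : α → ℝ) =ᵐ[μ] μ[f|m] := by
    refine ae_eq_condExp_of_forall_setIntegral_eq hm (hf.integrable one_le_two)
      (fun s _ _ => ((Lp.memLp G).integrable one_le_two).integrableOn)
      (fun s hs hμs => ?_) (aestronglyMeasurable_condExpL2 hm _)
    rw [hG]
    rw [integral_condExpL2_eq hm (hf.toLp f) hs hμs.ne]
    exact setIntegral_congr_ae (hm s hs) ((hf.coeFn_toLp).mono fun x hx _ => hx)
  exact (Lp.memLp G).ae_eq hGae

lemma integrable_mul_of_memℒp_two {α : Type*} {m0 : MeasurableSpace α} {μ : Measure α}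
    {f g : α → ℝ} (hf : MemLp f 2 μ) (hg : MemLp g 2 μ) :
    Integrable (fun x => f x * g x) μ := by
  have h : MemLp (f • g) 1 μ := MemLp.smul (φ := f) (f := g) hg hf
    (p := 2) (q := 2) (r := 1) (hpqr := ⟨by simp [ENNReal.inv_two_add_inv_two]⟩)
  exact memLp_one_iff_integrable.mp h

/-- The confounding bias of the representation `φ` satisfies
`E_Q[m_φ∘φ − m] = −E_P[m(X)·(w*(X) − w*_φ(φ(X)))]`,
where `w*_φ = d(Q∘φ⁻¹)/d(P_X∘φ⁻¹)`. -/
theorem confounding_bias_eq_neg_inner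
    {Ω 𝒳 Z : Type*} [MeasurableSpace Ω] [MeasurableSpace 𝒳] [MeasurableSpace Z]
    (P : Measure Ω) [IsProbabilityMeasure P]
    (X : Ω → 𝒳) (hX : Measurable X)
    (φ : 𝒳 → Z) (hφ : Measurable φ)
    (Q : Measure 𝒳) [IsProbabilityMeasure Q]
    (wstar : 𝒳 → ℝ) (hwstar_meas : Measurable wstar)
    (hwstar_nn : 0 ≤ᵐ[P.map X] wstar)
    (hQ : Q = (P.map X).withDensity fun x => ENNReal.ofReal (wstar x))
    (hwstarL2 : MemLp (fun ω => wstar (X ω)) 2 P)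
    (Y : Ω → ℝ) (hY : MemLp Y 2 P)
    (m : 𝒳 → ℝ) (hm_meas : Measurable m)
    (hm : (fun ω => m (X ω)) =ᵐ[P] P[Y | MeasurableSpace.comap X inferInstance])
    (mφ : Z → ℝ) (hmφ_meas : Measurable mφ)
    (hmφ : (fun ω => mφ (φ (X ω))) =ᵐ[P]
      P[Y | MeasurableSpace.comap (fun ω' => φ (X ω')) inferInstance]) :
    ∫ x, (mφ (φ x) - m x) ∂Q
      = - ∫ ω, m (X ω) *
          (wstar (X ω)
            - ((Measure.map φ Q).rnDeriv (Measure.map φ (P.map X)) (φ (X ω))).toReal) ∂P := by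
  haveI : IsProbabilityMeasure (P.map X) := Measure.isProbabilityMeasure_map hX.aemeasurable
  haveI : IsProbabilityMeasure ((P.map X).map φ) := Measure.isProbabilityMeasure_map hφ.aemeasurable
  haveI : IsProbabilityMeasure (Q.map φ) := Measure.isProbabilityMeasure_map hφ.aemeasurable
  set μ : Measure 𝒳 := P.map X with hμdef
  set ν : Measure Z := μ.map φ with hνdef
  set Qφ : Measure Z := Q.map φ with hQφdef
  set g : Z → ℝ := fun z => (Qφ.rnDeriv ν z).toReal with hgdef
  have hg_meas : Measurable g := (Measure.measurable_rnDeriv _ _).ennreal_toReal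
  have hQμ : Q ≪ μ := hQ ▸ withDensity_absolutelyContinuous _ _
  have hQφν : Qφ ≪ ν := hQμ.map hφ
  have hφX : Measurable fun ω => φ (X ω) := hφ.comp hX
  have hmapν : P.map (fun ω => φ (X ω)) = ν := (Measure.map_map hφ hX).symm
  -- rnDeriv of Q wrt μ is wstar a.e.
  have hrn : (fun x => (Q.rnDeriv μ x).toReal) =ᵐ[μ] wstar := by
    have h1 : Q.rnDeriv μ =ᵐ[μ] fun x => ENNReal.ofReal (wstar x) := by
      rw [hQ]; exact Measure.rnDeriv_withDensity μ hwstar_meas.ennreal_ofReal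
    filter_upwards [h1, hwstar_nn] with x hx h0
    simp [hx, ENNReal.toReal_ofReal h0]
  -- measurability wrt comap σ-algebras
  have hXm : Measurable[MeasurableSpace.comap X inferInstance] X := fun s hs => ⟨s, hs, rfl⟩
  have hφXm : Measurable[MeasurableSpace.comap (fun ω' => φ (X ω')) inferInstance]
      (fun ω' => φ (X ω')) := fun s hs => ⟨s, hs, rfl⟩
  have h𝔪' : MeasurableSpace.comap X inferInstance ≤ _ := hX.comap_le
  have h𝔪 : MeasurableSpace.comap (fun ω' => φ (X ω')) inferInstance ≤ _ := hφX.comap_le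
  -- L² facts
  have hw2 : MemLp wstar 2 μ :=
    (memLp_map_measure_iff hwstar_meas.aestronglyMeasurable hX.aemeasurable).mpr hwstarL2
  have hmX2 : MemLp (fun ω => m (X ω)) 2 P := (memℒp_condexp_two h𝔪' hY).ae_eq hm.symm
  have hmφX2 : MemLp (fun ω => mφ (φ (X ω))) 2 P := (memℒp_condexp_two h𝔪 hY).ae_eq hmφ.symm
  have hm2 : MemLp m 2 μ :=
    (memLp_map_measure_iff hm_meas.aestronglyMeasurable hX.aemeasurable).mpr hmX2
  have hmφ2 : MemLp (fun x => mφ (φ x)) 2 μ :=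
    (memLp_map_measure_iff (hmφ_meas.comp hφ).aestronglyMeasurable hX.aemeasurable).mpr hmφX2
  -- g ∘ φ ∘ X is integrable
  have hgν : Integrable g ν := Measure.integrable_toReal_rnDeriv
  have hgint : Integrable (fun ω => g (φ (X ω))) P := by
    rw [← hmapν] at hgν
    exact (integrable_map_measure hg_meas.aestronglyMeasurable hφX.aemeasurable).mp hgν
  -- the key representation: g∘φ∘X is the conditional expectation of wstar∘X
  have hGsm : StronglyMeasurable[MeasurableSpace.comap (fun ω' => φ (X ω')) inferInstance]
      (fun ω => g (φ (X ω))) := (hg_meas.comp hφXm).stronglyMeasurable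
  have hF : (fun ω => g (φ (X ω))) =ᵐ[P]
      P[(fun ω => wstar (X ω)) | MeasurableSpace.comap (fun ω' => φ (X ω')) inferInstance] := by
    refine ae_eq_condExp_of_forall_setIntegral_eq h𝔪 (hwstarL2.integrable one_le_two)
      (fun s _ _ => hgint.integrableOn) (fun s hs _ => ?_) hGsm.aestronglyMeasurable
    obtain ⟨t, ht, rfl⟩ := hs
    have h1 : ∫ ω in (fun ω' => φ (X ω')) ⁻¹' t, g (φ (X ω)) ∂P = (Qφ t).toReal := by
      rw [show (∫ ω in (fun ω' => φ (X ω')) ⁻¹' t, g (φ (X ω)) ∂P)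
            = ∫ z in t, g z ∂(P.map (fun ω => φ (X ω))) from
          (setIntegral_map ht hg_meas.aestronglyMeasurable hφX.aemeasurable).symm,
        hmapν]
      exact Measure.setIntegral_toReal_rnDeriv hQφν t
    have h2 : ∫ ω in (fun ω' => φ (X ω')) ⁻¹' t, wstar (X ω) ∂P = (Qφ t).toReal := by
      have e1 : ∫ ω in (fun ω' => φ (X ω')) ⁻¹' t, wstar (X ω) ∂P
          = ∫ x in φ ⁻¹' t, wstar x ∂μ :=
        (setIntegral_map (hφ ht) hwstar_meas.aestronglyMeasurable hX.aemeasurable).symm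
      have e2 : ∫ x in φ ⁻¹' t, wstar x ∂μ = ∫ x in φ ⁻¹' t, (Q.rnDeriv μ x).toReal ∂μ :=
        setIntegral_congr_ae (hφ ht) (hrn.symm.mono fun x hx _ => hx)
      rw [e1, e2, Measure.setIntegral_toReal_rnDeriv hQμ, hQφdef, Measure.map_apply hφ ht, measureReal_def]
    rw [h1, h2]
  have hG2 : MemLp (fun ω => g (φ (X ω))) 2 P := (memℒp_condexp_two h𝔪 hwstarL2).ae_eq hF.symm
  -- key pull-out equality
  have key : ∫ ω, g (φ (X ω)) * mφ (φ (X ω)) ∂P = ∫ ω, g (φ (X ω)) * m (X ω) ∂P := by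
    have hGsm' : StronglyMeasurable[MeasurableSpace.comap X inferInstance]
        (fun ω => g (φ (X ω))) := ((hg_meas.comp hφ).comp hXm).stronglyMeasurable
    have hGY : Integrable (fun ω => g (φ (X ω)) * Y ω) P := integrable_mul_of_memℒp_two hG2 hY
    have hYint : Integrable Y P := hY.integrable one_le_two
    have hmul : Integrable ((fun ω => g (φ (X ω))) * Y) P := hGY
    have e1 : ∫ ω, g (φ (X ω)) * Y ω ∂P = ∫ ω, g (φ (X ω)) * mφ (φ (X ω)) ∂P := by
      have h := condExp_mul_of_stronglyMeasurable_left hGsm hmul hYint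
      calc ∫ ω, g (φ (X ω)) * Y ω ∂P
          = ∫ ω, (P[(fun ω => g (φ (X ω))) * Y |
              MeasurableSpace.comap (fun ω' => φ (X ω')) inferInstance]) ω ∂P :=
            (integral_condExp h𝔪).symm
        _ = ∫ ω, g (φ (X ω)) * mφ (φ (X ω)) ∂P := by
            refine integral_congr_ae (h.trans ?_)
            filter_upwards [hmφ] with ω hω
            simp [Pi.mul_apply, hω]
    have e2 : ∫ ω, g (φ (X ω)) * Y ω ∂P = ∫ ω, g (φ (X ω)) * m (X ω) ∂P := by
      have h := condExp_mul_of_stronglyMeasurable_left hGsm' hmul hYint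
      calc ∫ ω, g (φ (X ω)) * Y ω ∂P
          = ∫ ω, (P[(fun ω => g (φ (X ω))) * Y |
              MeasurableSpace.comap X inferInstance]) ω ∂P :=
            (integral_condExp h𝔪').symm
        _ = ∫ ω, g (φ (X ω)) * m (X ω) ∂P := by
            refine integral_congr_ae (h.trans ?_)
            filter_upwards [hm] with ω hω
            simp [Pi.mul_apply, hω]
    rw [← e1, e2]
  -- integrability under Q
  have hmQ : Integrable m Q := by
    refine (integrable_rnDeriv_smul_iff hQμ).mp ?_
    refine (integrable_mul_of_memℒp_two hw2 hm2).congr ?_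
    filter_upwards [hrn] with x hx
    simp [hx, smul_eq_mul]
  have hmφQ : Integrable (fun x => mφ (φ x)) Q := by
    refine (integrable_rnDeriv_smul_iff hQμ).mp ?_
    refine (integrable_mul_of_memℒp_two hw2 hmφ2).congr ?_
    filter_upwards [hrn] with x hx
    simp [hx, smul_eq_mul]
  -- compute ∫ m dQ
  have im : ∫ x, m x ∂Q = ∫ ω, wstar (X ω) * m (X ω) ∂P := by
    rw [← integral_rnDeriv_smul hQμ (f := m)]
    have : ∫ x, (Q.rnDeriv μ x).toReal • m x ∂μ = ∫ x, wstar x * m x ∂μ :=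
      integral_congr_ae (hrn.mono fun x hx => by simp [hx, smul_eq_mul])
    rw [this, hμdef, integral_map (f := fun x => wstar x * m x) hX.aemeasurable
      (hwstar_meas.mul hm_meas).aestronglyMeasurable]
  -- compute ∫ mφ∘φ dQ
  have imφ : ∫ x, mφ (φ x) ∂Q = ∫ ω, g (φ (X ω)) * mφ (φ (X ω)) ∂P := by
    have s1 : ∫ x, mφ (φ x) ∂Q = ∫ z, mφ z ∂Qφ :=
      (integral_map hφ.aemeasurable hmφ_meas.aestronglyMeasurable).symm
    have s2 : ∫ z, mφ z ∂Qφ = ∫ z, g z * mφ z ∂ν := by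
      rw [← integral_rnDeriv_smul hQφν (f := mφ)]
      exact integral_congr_ae (Filter.Eventually.of_forall fun z => by simp [hgdef, smul_eq_mul])
    have s3 : ∫ z, g z * mφ z ∂ν = ∫ ω, g (φ (X ω)) * mφ (φ (X ω)) ∂P := by
      rw [← hmapν]
      exact integral_map hφX.aemeasurable (hg_meas.mul hmφ_meas).aestronglyMeasurable
    rw [s1, s2, s3]
  -- right-hand side integrability
  have hint1 : Integrable (fun ω => m (X ω) * wstar (X ω)) P :=
    integrable_mul_of_memℒp_two hmX2 hwstarL2
  have hint2 : Integrable (fun ω => m (X ω) * g (φ (X ω))) P :=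
    integrable_mul_of_memℒp_two hmX2 hG2
  -- put everything together
  have lhs : ∫ x, (mφ (φ x) - m x) ∂Q
      = ∫ ω, g (φ (X ω)) * m (X ω) ∂P - ∫ ω, wstar (X ω) * m (X ω) ∂P := by
    rw [integral_sub hmφQ hmQ, im, imφ, key]
  have rhs : ∫ ω, m (X ω) * (wstar (X ω) - g (φ (X ω))) ∂P
      = ∫ ω, m (X ω) * wstar (X ω) ∂P - ∫ ω, m (X ω) * g (φ (X ω)) ∂P := by
    rw [← integral_sub hint1 hint2]
    exact integral_congr_ae (Filter.Eventually.of_forall fun ω => by ring)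
  rw [lhs]
  rw [show (∫ ω, m (X ω) * (wstar (X ω)
      - ((Measure.map φ Q).rnDeriv (Measure.map φ (P.map X)) (φ (X ω))).toReal) ∂P)
    = ∫ ω, m (X ω) * (wstar (X ω) - g (φ (X ω))) ∂P from rfl, rhs]
  rw [show (∫ ω, g (φ (X ω)) * m (X ω) ∂P) = ∫ ω, m (X ω) * g (φ (X ω)) ∂P from
      integral_congr_ae (Filter.Eventually.of_forall fun ω => mul_comm _ _),
    show (∫ ω, wstar (X ω) * m (X ω) ∂P) = ∫ ω, m (X ω) * wstar (X ω) ∂P from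
      integral_congr_ae (Filter.Eventually.of_forall fun ω => mul_comm _ _)]
  ring

end
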